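/- Let f : ℝⁿ → ℝ ∪ {+∞} be a proper lower semicontinuous convex function whose minimization problem min_{x ∈ ℝⁿ} f(x) has a solution. Then the proximal iteration x^{p+1} = (I + ∂f)^{-1}(x^p), from any starting point x⁰, converges to a minimizer of f. -/

import Mathlib

open scoped RealInnerProductSpace

/-- The convex subdifferential of an extended-real-valued function. -/
def Subdiff {n : ℕ} (f : EuclideanSpace ℝ (Fin n) → EReal)
    (x : EuclideanSpace ℝ (Fin n)) : Set (EuclideanSpace ℝ (Fin n)) :=
  {v | ∀ y, f x + ((⟪v, y - x⟫ : ℝ) : EReal) ≤ f y}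

theorem proximal_iteration_converges_to_minimizer (n : ℕ)
    (f : EuclideanSpace ℝ (Fin n) → EReal)
    (hproper : (∃ x, f x ≠ ⊤) ∧ ∀ x, f x ≠ ⊥)
    (hlsc : LowerSemicontinuous f)
    (hconvex : ∀ x y (a b : ℝ), 0 ≤ a → 0 ≤ b → a + b = 1 →
      f (a • x + b • y) ≤ (a : EReal) * f x + (b : EReal) * f y)
    (hmin : ∃ z, ∀ y, f z ≤ f y)
    (F : EuclideanSpace ℝ (Fin n) → EuclideanSpace ℝ (Fin n))
    (hF : ∀ x y, F x = y ↔ x - y ∈ Subdiff f y)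
    (x : ℕ → EuclideanSpace ℝ (Fin n))
    (hx : ∀ p, x (p + 1) = F (x p)) :
    ∃ xstar, (∀ y, f xstar ≤ f y) ∧ Filter.Tendsto x Filter.atTop (nhds xstar) := by
  obtain ⟨z, hz⟩ := hmin
  obtain ⟨⟨x0, hx0⟩, hbot⟩ := hproper
  -- subgradient inequality at each step
  have hsub : ∀ p y, f (x (p+1)) + ((⟪x p - x (p+1), y - x (p+1)⟫ : ℝ) : EReal) ≤ f y := by
    intro p y
    exact (hF (x p) (x (p+1))).mp (hx p).symm y
  -- key: inner products nonpositive w.r.t. any minimizer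
  have key : ∀ p (w : EuclideanSpace ℝ (Fin n)), (∀ y, f w ≤ f y) →
      ⟪x p - x (p+1), w - x (p+1)⟫ ≤ 0 := by
    intro p w hw
    have hwt : f w ≠ ⊤ := fun h => hx0 (top_le_iff.mp (h ▸ hw x0))
    set r := (f w).toReal with hr
    have hrw : (r : EReal) = f w := EReal.coe_toReal hwt (hbot w)
    set c : ℝ := ⟪x p - x (p+1), w - x (p+1)⟫ with hc
    have h1 : f (x (p+1)) + (c : EReal) ≤ f w := hsub p w
    have h2 : f w + (c : EReal) ≤ f (x (p+1)) + (c : EReal) :=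
      add_le_add_left (hw (x (p+1))) _
    have h3 : ((r + c : ℝ) : EReal) ≤ (r : EReal) := by
      rw [EReal.coe_add, hrw]
      exact le_trans h2 h1
    have h4 : r + c ≤ r := EReal.coe_le_coe_iff.mp h3
    linarith
  -- Fejér monotonicity
  have fejer : ∀ p (w : EuclideanSpace ℝ (Fin n)), (∀ y, f w ≤ f y) →
      ‖x (p+1) - w‖ ^ 2 + ‖x (p+1) - x p‖ ^ 2 ≤ ‖x p - w‖ ^ 2 := by
    intro p w hw
    have hk := key p w hw
    have hab : (x p - x (p+1)) + (x (p+1) - w) = x p - w := by abel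
    have hexp := norm_add_sq_real (x p - x (p+1)) (x (p+1) - w)
    rw [hab] at hexp
    have hip : ⟪x p - x (p+1), x (p+1) - w⟫ = - ⟪x p - x (p+1), w - x (p+1)⟫ := by
      rw [← inner_neg_right]; congr 1; abel
    have hrev : ‖x (p+1) - x p‖ = ‖x p - x (p+1)‖ := norm_sub_rev _ _
    rw [hrev]
    nlinarith [hk, hexp, hip]
  -- distances to z are antitone
  have dmono : ∀ (w : EuclideanSpace ℝ (Fin n)), (∀ y, f w ≤ f y) →
      ∀ p q, p ≤ q → ‖x q - w‖ ≤ ‖x p - w‖ := by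
    intro w hw
    have step : ∀ p, ‖x (p+1) - w‖ ≤ ‖x p - w‖ := by
      intro p
      have := fejer p w hw
      nlinarith [norm_nonneg (x (p+1) - w), norm_nonneg (x p - w), sq_nonneg ‖x (p+1) - x p‖]
    intro p q hpq
    induction q with
    | zero => simp_all
    | succ q ih =>
      rcases Nat.lt_or_ge p (q+1) with h | h
      · exact le_trans (step q) (ih (Nat.lt_succ_iff.mp h))
      · have : p = q + 1 := le_antisymm hpq h
        simp [this]
  -- successive differences tend to zero
  have hsum : Summable (fun p => ‖x (p+1) - x p‖ ^ 2) := by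
    apply summable_of_sum_range_le (c := ‖x 0 - z‖ ^ 2) (fun p => sq_nonneg _)
    intro N
    have : ∑ i ∈ Finset.range N, ‖x (i+1) - x i‖ ^ 2
        ≤ ∑ i ∈ Finset.range N, (‖x i - z‖ ^ 2 - ‖x (i+1) - z‖ ^ 2) := by
      apply Finset.sum_le_sum
      intro i _
      have := fejer i z hz
      linarith
    rw [Finset.sum_range_sub' (fun i => ‖x i - z‖ ^ 2) N] at this
    nlinarith [sq_nonneg ‖x N - z‖]
  have hdiff0 : Filter.Tendsto (fun p => x (p+1) - x p) Filter.atTop (nhds 0) := by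
    rw [tendsto_zero_iff_norm_tendsto_zero]
    have h2 : Filter.Tendsto (fun p => ‖x (p+1) - x p‖ ^ 2) Filter.atTop (nhds 0) :=
      hsum.tendsto_atTop_zero
    have h3 := (Real.continuous_sqrt.tendsto 0).comp h2
    have heq : ((fun s => Real.sqrt s) ∘ fun p => ‖x (p+1) - x p‖ ^ 2)
        = fun p => ‖x (p+1) - x p‖ := by
      funext p
      simp [Real.sqrt_sq (norm_nonneg _)]
    rw [heq] at h3
    simpa using h3
  -- bounded sequence, extract convergent subsequence
  have hbd : ∀ p, x p ∈ Metric.closedBall z ‖x 0 - z‖ := by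
    intro p
    rw [Metric.mem_closedBall, dist_eq_norm]
    exact dmono z hz 0 p (Nat.zero_le p)
  obtain ⟨xstar, -, φ, hφ, hconv⟩ :=
    tendsto_subseq_of_bounded Metric.isBounded_closedBall hbd
  have hφtop : Filter.Tendsto φ Filter.atTop Filter.atTop := hφ.tendsto_atTop
  -- x (φ k + 1) also tends to xstar
  have hconv' : Filter.Tendsto (fun k => x (φ k + 1)) Filter.atTop (nhds xstar) := by
    have hd : Filter.Tendsto (fun k => x (φ k + 1) - x (φ k)) Filter.atTop (nhds 0) :=
      hdiff0.comp hφtop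
    have := hd.add hconv
    simpa using this
  -- xstar is a minimizer
  have hxstar : ∀ y, f xstar ≤ f y := by
    intro y
    by_contra hcon
    push_neg at hcon
    obtain ⟨c, hc1, hc2⟩ := EReal.exists_between_coe_real hcon
    obtain ⟨c', hc'1, hc'2⟩ := EReal.exists_between_coe_real hc1
    -- eventually f (x (φ k + 1)) > c
    have hev1 : ∀ᶠ k in Filter.atTop, (c : EReal) < f (x (φ k + 1)) :=
      hconv'.eventually (hlsc xstar (c : EReal) hc2)
    -- t k → 0
    have ht : Filter.Tendsto (fun k => ⟪x (φ k) - x (φ k + 1), y - x (φ k + 1)⟫)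
        Filter.atTop (nhds 0) := by
      have ha : Filter.Tendsto (fun k => x (φ k) - x (φ k + 1)) Filter.atTop (nhds 0) := by
        have := (hdiff0.comp hφtop).neg
        simpa using this
      have hb : Filter.Tendsto (fun k => y - x (φ k + 1)) Filter.atTop (nhds (y - xstar)) :=
        tendsto_const_nhds.sub hconv'
      have := Filter.Tendsto.inner (𝕜 := ℝ) ha hb
      simpa using this
    have hev2 : ∀ᶠ k in Filter.atTop,
        c' - c < ⟪x (φ k) - x (φ k + 1), y - x (φ k + 1)⟫ := by
      have : c' - c < (0 : ℝ) := by
        have := EReal.coe_lt_coe_iff.mp hc'2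
        linarith
      exact ht.eventually (eventually_gt_nhds this)
    obtain ⟨k, hk1, hk2⟩ := (hev1.and hev2).exists
    set t : ℝ := ⟪x (φ k) - x (φ k + 1), y - x (φ k + 1)⟫ with htdef
    have h1 : f (x (φ k + 1)) + (t : EReal) ≤ f y := hsub (φ k) y
    have h2 : ((c + t : ℝ) : EReal) ≤ f y := by
      rw [EReal.coe_add]
      exact le_trans (add_le_add_left (le_of_lt hk1) _) h1
    have h3 : ((c + t : ℝ) : EReal) < (c' : EReal) := lt_of_le_of_lt h2 hc'1
    have h4 : c + t < c' := EReal.coe_lt_coe_iff.mp h3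
    linarith
  -- conclude convergence of the whole sequence
  refine ⟨xstar, hxstar, ?_⟩
  rw [Metric.tendsto_atTop]
  intro ε hε
  have hns : Filter.Tendsto (fun k => ‖x (φ k) - xstar‖) Filter.atTop (nhds 0) := by
    rw [← tendsto_zero_iff_norm_tendsto_zero]
    have := hconv.sub (tendsto_const_nhds (x := xstar))
    simpa [Function.comp] using this
  have : ∀ᶠ k in Filter.atTop, ‖x (φ k) - xstar‖ < ε :=
    hns.eventually (eventually_lt_nhds hε)
  obtain ⟨k, hk⟩ := this.exists
  refine ⟨φ k, fun p hp => ?_⟩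
  rw [dist_eq_norm]
  exact lt_of_le_of_lt (dmono xstar hxstar (φ k) p hp) hk
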